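/- Let U and B be Hopf algebras over a field k and τ : U ⊗ B → k a linear map satisfying: (1) τ(uv, a) = τ(u, a₁)τ(v, a₂); (2) τ(u, ab) = τ(u₁, b)τ(u₂, a); (3) τ(1, a) = ε_B(a); (4) τ(u, 1) = ε_U(u). Then σ : (U⊗B) ⊗ (U⊗B) → k defined by σ(u⊗a, v⊗b) := ε_U(u) τ(v, a) ε_B(b) is a unital 2-cocycle on the tensor product Hopf algebra U ⊗ B, with convolution inverse σ⁻¹(u⊗a, v⊗b) = ε_U(u) τ(S(v), a) ε_B(b). -/

import Mathlib

/-!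
Both sides of the cocycle identity at `(u ⊗ a, v ⊗ b, w ⊗ c)` collapse, by counitality, to
`ε(u) ε(c)` times `∑ τ(v, a₁) τ(w, a₂ b)` and `∑ τ(w₁, b) τ(v w₂, a)` respectively; expanding
`τ(w, a₂ b)` by (2) and `τ(v w₂, a)` by (1) turns both into `∑ τ(v, a₁) τ(w₁, b) τ(w₂, a₂)`.
For the inverse, (1) says that `u ↦ τ(u, -)` is multiplicative into the convolution algebra of
`B`, so `∑ τ(v₁, -) * τ(S v₂, -) = τ(ε(v) 1, -) = ε(v) ε` by (3), and symmetrically.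
-/

open TensorProduct

universe u

variable {k : Type u} [Field k]

/-- Convolution product of two functionals on a coalgebra. -/
noncomputable def conv {C : Type u} [AddCommGroup C] [Module k C] [Coalgebra k C]
    (f g : C →ₗ[k] k) : C →ₗ[k] k :=
  LinearMap.mul' k k ∘ₗ TensorProduct.map f g ∘ₗ Coalgebra.comul

/-- The 2-cocycle condition `σ(x₁,y₁)σ(x₂y₂,z) = σ(y₁,z₁)σ(x,y₂z₂)` on a bialgebra `A`. -/
noncomputable def IsCocycle {A : Type u} [Ring A] [Bialgebra k A]
    (σ : A ⊗[k] A →ₗ[k] k) : Prop :=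
  conv (LinearMap.mul' k k ∘ₗ TensorProduct.map σ Coalgebra.counit)
      (σ ∘ₗ TensorProduct.map (LinearMap.mul' k A) LinearMap.id) =
    conv ((LinearMap.mul' k k ∘ₗ TensorProduct.map Coalgebra.counit σ) ∘ₗ
        (TensorProduct.assoc k A A A).toLinearMap)
      (σ ∘ₗ TensorProduct.map LinearMap.id (LinearMap.mul' k A) ∘ₗ
        (TensorProduct.assoc k A A A).toLinearMap)

open Coalgebra WithConv

section Convolution

variable {C : Type u} [AddCommGroup C] [Module k C] [Coalgebra k C] {ι : Type*}

theorem conv_apply_eq_sum {c : C} (r : Repr k c ι) (f g : C →ₗ[k] k) :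
    conv f g c = ∑ i ∈ r.index, f (r.left i) * g (r.right i) :=
  r.convMul_apply (toConv f) (toConv g)

theorem Coalgebra.Repr.sum_counit_mul {c : C} (r : Repr k c ι) (f : C →ₗ[k] k) :
    ∑ i ∈ r.index, counit (R := k) (r.left i) * f (r.right i) = f c := by
  rw [← conv_apply_eq_sum r]
  exact congr($(one_mul (toConv f)) c)

theorem Coalgebra.Repr.sum_mul_counit {c : C} (r : Repr k c ι) (f : C →ₗ[k] k) :
    ∑ i ∈ r.index, f (r.left i) * counit (R := k) (r.right i) = f c := by
  rw [← conv_apply_eq_sum r]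
  exact congr($(mul_one (toConv f)) c)

end Convolution

section Cocycle

variable {A : Type u} [Ring A] [Bialgebra k A] {ι κ : Type*}

noncomputable def cocycleLhs (σ : A ⊗[k] A →ₗ[k] k) : (A ⊗[k] A) ⊗[k] A →ₗ[k] k :=
  conv (LinearMap.mul' k k ∘ₗ TensorProduct.map σ Coalgebra.counit)
    (σ ∘ₗ TensorProduct.map (LinearMap.mul' k A) LinearMap.id)

noncomputable def cocycleRhs (σ : A ⊗[k] A →ₗ[k] k) : (A ⊗[k] A) ⊗[k] A →ₗ[k] k :=
  conv ((LinearMap.mul' k k ∘ₗ TensorProduct.map Coalgebra.counit σ) ∘ₗ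
      (TensorProduct.assoc k A A A).toLinearMap)
    (σ ∘ₗ TensorProduct.map LinearMap.id (LinearMap.mul' k A) ∘ₗ
      (TensorProduct.assoc k A A A).toLinearMap)

theorem isCocycle_iff (σ : A ⊗[k] A →ₗ[k] k) : IsCocycle σ ↔ cocycleLhs σ = cocycleRhs σ :=
  Iff.rfl

theorem cocycleLhs_apply (σ : A ⊗[k] A →ₗ[k] k) {x y : A} (z : A)
    (rx : Repr k x ι) (ry : Repr k y κ) :
    cocycleLhs σ ((x ⊗ₜ y) ⊗ₜ z) = ∑ i ∈ rx.index, ∑ j ∈ ry.index,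
      σ (rx.left i ⊗ₜ ry.left j) * σ ((rx.right i * ry.right j) ⊗ₜ z) := by
  rw [cocycleLhs, conv_apply_eq_sum ((rx.tmul ry).tmul (ℛ k z))]
  simp only [Repr.tmul_index, Repr.tmul_left, Repr.tmul_right, Finset.sum_product,
    LinearMap.comp_apply, TensorProduct.map_tmul, LinearMap.mul'_apply, LinearMap.id_apply,
    mul_assoc, ← Finset.mul_sum]
  exact Finset.sum_congr rfl fun i _ => Finset.sum_congr rfl fun j _ =>
    congrArg _ ((ℛ k z).sum_counit_mul (σ ∘ₗ TensorProduct.mk k A A _))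

theorem cocycleRhs_apply (σ : A ⊗[k] A →ₗ[k] k) (x : A) {y z : A}
    (ry : Repr k y ι) (rz : Repr k z κ) :
    cocycleRhs σ ((x ⊗ₜ y) ⊗ₜ z) = ∑ l ∈ rz.index, ∑ j ∈ ry.index,
      σ (ry.left j ⊗ₜ rz.left l) * σ (x ⊗ₜ (ry.right j * rz.right l)) := by
  rw [cocycleRhs, conv_apply_eq_sum (((ℛ k x).tmul ry).tmul rz)]
  simp only [Repr.tmul_index, Repr.tmul_left, Repr.tmul_right, Finset.sum_product_right,
    LinearMap.comp_apply, TensorProduct.map_tmul, LinearMap.mul'_apply, LinearMap.id_apply,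
    LinearEquiv.coe_coe, TensorProduct.assoc_tmul, mul_assoc, mul_left_comm (counit _),
    ← Finset.mul_sum]
  exact Finset.sum_congr rfl fun l _ => Finset.sum_congr rfl fun j _ =>
    congrArg _ ((ℛ k x).sum_counit_mul (σ ∘ₗ (TensorProduct.mk k A A).flip _))

end Cocycle

section Pairing

variable {U B : Type u} [Ring U] [Ring B] [HopfAlgebra k U] [HopfAlgebra k B] {ι κ : Type*}
  (τ : U ⊗[k] B →ₗ[k] k)

theorem curry_mul_eq_conv
    (h1 : τ ∘ₗ TensorProduct.map (LinearMap.mul' k U) LinearMap.id =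
      LinearMap.mul' k k ∘ₗ TensorProduct.map τ τ ∘ₗ
        (TensorProduct.tensorTensorTensorComm k U U B B).toLinearMap ∘ₗ
        LinearMap.lTensor (U ⊗[k] U) (Coalgebra.comul (R := k) (A := B)))
    (x y : U) :
    TensorProduct.curry τ (x * y) = conv (TensorProduct.curry τ x) (TensorProduct.curry τ y) := by
  ext a
  have h := congr($h1 ((x ⊗ₜ y) ⊗ₜ a))
  simp only [LinearMap.comp_apply, TensorProduct.map_tmul, LinearMap.mul'_apply,
    LinearMap.id_apply, LinearMap.lTensor_tmul, ← (ℛ k a).eq, TensorProduct.tmul_sum, map_sum,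
    LinearEquiv.coe_coe, TensorProduct.tensorTensorTensorComm_tmul] at h
  rw [conv_apply_eq_sum (ℛ k a)]
  exact h

theorem flip_curry_mul_eq_conv
    (h2 : τ ∘ₗ LinearMap.lTensor U (LinearMap.mul' k B) =
      LinearMap.mul' k k ∘ₗ TensorProduct.map τ τ ∘ₗ
        (TensorProduct.tensorTensorTensorComm k U U B B).toLinearMap ∘ₗ
        TensorProduct.map (Coalgebra.comul (R := k) (A := U))
          (TensorProduct.comm k B B).toLinearMap)
    (a b : B) :
    (TensorProduct.curry τ).flip (a * b) =
      conv ((TensorProduct.curry τ).flip b) ((TensorProduct.curry τ).flip a) := by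
  ext u
  have h := congr($h2 (u ⊗ₜ (a ⊗ₜ b)))
  simp only [LinearMap.comp_apply, TensorProduct.map_tmul, LinearMap.mul'_apply,
    LinearMap.lTensor_tmul, ← (ℛ k u).eq, TensorProduct.sum_tmul, map_sum,
    LinearEquiv.coe_coe, TensorProduct.comm_tmul, TensorProduct.tensorTensorTensorComm_tmul] at h
  rw [conv_apply_eq_sum (ℛ k u)]
  exact h

theorem pairing_exchange
    (hl : ∀ x y : U, TensorProduct.curry τ (x * y) =
      conv (TensorProduct.curry τ x) (TensorProduct.curry τ y))
    (hr : ∀ a b : B, (TensorProduct.curry τ).flip (a * b) =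
      conv ((TensorProduct.curry τ).flip b) ((TensorProduct.curry τ).flip a))
    (v w : U) (a b : B) (ra : Repr k a ι) (rw : Repr k w κ) :
    ∑ i ∈ ra.index, τ (v ⊗ₜ ra.left i) * τ (w ⊗ₜ (ra.right i * b)) =
      ∑ j ∈ rw.index, τ (rw.left j ⊗ₜ b) * τ ((v * rw.right j) ⊗ₜ a) := by
  have expand_left (i : ι) : τ (w ⊗ₜ (ra.right i * b)) =
      ∑ j ∈ rw.index, τ (rw.left j ⊗ₜ b) * τ (rw.right j ⊗ₜ ra.right i) :=
    (congr($(hr _ _) w)).trans (conv_apply_eq_sum rw _ _)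
  have expand_right (j : κ) : τ ((v * rw.right j) ⊗ₜ a) =
      ∑ i ∈ ra.index, τ (v ⊗ₜ ra.left i) * τ (rw.right j ⊗ₜ ra.right i) :=
    (congr($(hl _ _) a)).trans (conv_apply_eq_sum ra _ _)
  simp only [expand_left, expand_right, Finset.mul_sum]
  rw [Finset.sum_comm]
  exact Finset.sum_congr rfl fun j _ => Finset.sum_congr rfl fun i _ => by ring

theorem conv_pairing_rTensor
    (hl : ∀ x y : U, TensorProduct.curry τ (x * y) =
      conv (TensorProduct.curry τ x) (TensorProduct.curry τ y))
    (f g : U →ₗ[k] U) :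
    conv (τ ∘ₗ LinearMap.rTensor B f) (τ ∘ₗ LinearMap.rTensor B g) =
      τ ∘ₗ LinearMap.rTensor B (toConv f * toConv g).ofConv := by
  refine TensorProduct.ext' fun v a => ?_
  rw [conv_apply_eq_sum ((ℛ k v).tmul (ℛ k a)), LinearMap.comp_apply, LinearMap.rTensor_tmul,
    show (toConv f * toConv g).ofConv v = _ from (ℛ k v).convMul_apply _ _,
    TensorProduct.sum_tmul, map_sum, Repr.tmul_index, Finset.sum_product]
  refine Finset.sum_congr rfl fun i _ => ?_
  rw [← TensorProduct.curry_apply τ, hl, conv_apply_eq_sum (ℛ k a)]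
  rfl

theorem pairing_rTensor_convOne (h3 : ∀ a : B, τ ((1 : U) ⊗ₜ[k] a) = counit (R := k) a) :
    τ ∘ₗ LinearMap.rTensor B (1 : WithConv (U →ₗ[k] U)).ofConv = counit := by
  refine TensorProduct.ext' fun v a => ?_
  simp [h3, Algebra.algebraMap_eq_smul_one, ← TensorProduct.smul_tmul', mul_comm]

theorem conv_pairing_antipode
    (hl : ∀ x y : U, TensorProduct.curry τ (x * y) =
      conv (TensorProduct.curry τ x) (TensorProduct.curry τ y))
    (h3 : ∀ a : B, τ ((1 : U) ⊗ₜ[k] a) = counit (R := k) a) :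
    conv τ (τ ∘ₗ LinearMap.rTensor B (HopfAlgebra.antipode k)) = counit := by
  simpa [LinearMap.id_mul_antipode, pairing_rTensor_convOne τ h3] using
    conv_pairing_rTensor τ hl LinearMap.id (HopfAlgebra.antipode k)

theorem conv_antipode_pairing
    (hl : ∀ x y : U, TensorProduct.curry τ (x * y) =
      conv (TensorProduct.curry τ x) (TensorProduct.curry τ y))
    (h3 : ∀ a : B, τ ((1 : U) ⊗ₜ[k] a) = counit (R := k) a) :
    conv (τ ∘ₗ LinearMap.rTensor B (HopfAlgebra.antipode k)) τ = counit := by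
  simpa [LinearMap.antipode_mul_id, pairing_rTensor_convOne τ h3] using
    conv_pairing_rTensor τ hl (HopfAlgebra.antipode k) LinearMap.id

end Pairing

section TensorCocycle

variable {U B : Type u} [Ring U] [Ring B] [HopfAlgebra k U] [HopfAlgebra k B]
  {τ : U ⊗[k] B →ₗ[k] k} {σ : (U ⊗[k] B) ⊗[k] (U ⊗[k] B) →ₗ[k] k}

theorem cocycleLhs_tmul
    (hσ : ∀ (u v : U) (a b : B), σ ((u ⊗ₜ[k] a) ⊗ₜ[k] (v ⊗ₜ[k] b)) =
      counit (R := k) u * τ (v ⊗ₜ[k] a) * counit (R := k) b)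
    (u v w : U) (a b c : B) :
    cocycleLhs σ (((u ⊗ₜ a) ⊗ₜ (v ⊗ₜ b)) ⊗ₜ (w ⊗ₜ c)) = counit (R := k) u * counit (R := k) c *
      ∑ i ∈ (ℛ k a).index, τ (v ⊗ₜ (ℛ k a).left i) * τ (w ⊗ₜ ((ℛ k a).right i * b)) := by
  rw [cocycleLhs_apply σ _ ((ℛ k u).tmul (ℛ k a)) ((ℛ k v).tmul (ℛ k b))]
  simp only [Repr.tmul_index, Repr.tmul_left, Repr.tmul_right, Finset.sum_product,
    Algebra.TensorProduct.tmul_mul_tmul, hσ, Bialgebra.counit_mul]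
  have hv (a' : B) := (ℛ k v).sum_mul_counit (τ ∘ₗ (TensorProduct.mk k U B).flip a')
  have hb (a' : B) :=
    (ℛ k b).sum_counit_mul (τ ∘ₗ TensorProduct.mk k U B w ∘ₗ LinearMap.mulLeft k a')
  simp only [LinearMap.comp_apply, LinearMap.flip_apply, TensorProduct.mk_apply,
    LinearMap.mulLeft_apply] at hv hb
  -- Expand the closed form into a Sweedler sum nested in the same order as the left side
  -- (the placement of the sums decides the nesting), then compare summands.
  conv_rhs => rw [← (ℛ k u).sum_counit_mul counit]; simp only [← hv, ← hb]
  simp only [Finset.sum_mul]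
  simp only [Finset.mul_sum]
  simp only [mul_comm, mul_left_comm, mul_assoc]

theorem cocycleRhs_tmul
    (hσ : ∀ (u v : U) (a b : B), σ ((u ⊗ₜ[k] a) ⊗ₜ[k] (v ⊗ₜ[k] b)) =
      counit (R := k) u * τ (v ⊗ₜ[k] a) * counit (R := k) b)
    (u v w : U) (a b c : B) :
    cocycleRhs σ (((u ⊗ₜ a) ⊗ₜ (v ⊗ₜ b)) ⊗ₜ (w ⊗ₜ c)) = counit (R := k) u * counit (R := k) c *
      ∑ j ∈ (ℛ k w).index, τ ((ℛ k w).left j ⊗ₜ b) * τ ((v * (ℛ k w).right j) ⊗ₜ a) := by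
  rw [cocycleRhs_apply σ _ ((ℛ k v).tmul (ℛ k b)) ((ℛ k w).tmul (ℛ k c))]
  simp only [Repr.tmul_index, Repr.tmul_left, Repr.tmul_right, Finset.sum_product_right,
    Algebra.TensorProduct.tmul_mul_tmul, hσ, Bialgebra.counit_mul]
  have hb (w' : U) := (ℛ k b).sum_mul_counit (τ ∘ₗ TensorProduct.mk k U B w')
  have hv (w' : U) :=
    (ℛ k v).sum_counit_mul (τ ∘ₗ (TensorProduct.mk k U B).flip a ∘ₗ LinearMap.mulRight k w')
  simp only [LinearMap.comp_apply, LinearMap.flip_apply, TensorProduct.mk_apply,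
    LinearMap.mulRight_apply] at hv hb
  conv_rhs => rw [mul_assoc, ← (ℛ k c).sum_counit_mul counit]; simp only [← hv, ← hb]
  simp only [Finset.sum_mul]
  simp only [Finset.mul_sum]
  simp only [mul_comm, mul_left_comm, mul_assoc]

theorem conv_apply_of_counit_mul_mul_counit {F G : (U ⊗[k] B) ⊗[k] (U ⊗[k] B) →ₗ[k] k}
    {f g : U ⊗[k] B →ₗ[k] k}
    (hF : ∀ (u v : U) (a b : B), F ((u ⊗ₜ a) ⊗ₜ (v ⊗ₜ b)) =
      counit (R := k) u * f (v ⊗ₜ a) * counit (R := k) b)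
    (hG : ∀ (u v : U) (a b : B), G ((u ⊗ₜ a) ⊗ₜ (v ⊗ₜ b)) =
      counit (R := k) u * g (v ⊗ₜ a) * counit (R := k) b)
    (u v : U) (a b : B) :
    conv F G ((u ⊗ₜ a) ⊗ₜ (v ⊗ₜ b)) =
      counit (R := k) u * conv f g (v ⊗ₜ a) * counit (R := k) b := by
  rw [conv_apply_eq_sum (((ℛ k u).tmul (ℛ k a)).tmul ((ℛ k v).tmul (ℛ k b)))]
  simp only [Repr.tmul_index, Repr.tmul_left, Repr.tmul_right, Finset.sum_product, hF, hG]
  rw [mul_assoc, conv_apply_eq_sum ((ℛ k v).tmul (ℛ k a)), Repr.tmul_index,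
    Finset.sum_product_right, ← (ℛ k u).sum_counit_mul counit, ← (ℛ k b).sum_counit_mul counit]
  simp only [Repr.tmul_left, Repr.tmul_right, Finset.sum_mul]
  simp only [Finset.mul_sum]
  simp only [mul_comm, mul_left_comm, mul_assoc]

end TensorCocycle

theorem tensor_cocycle_from_pairing_general {U B : Type u} [Ring U] [Ring B]
    [HopfAlgebra k U] [HopfAlgebra k B]
    (τ : U ⊗[k] B →ₗ[k] k)
    -- (1) `τ(uv, a) = τ(u, a₁) τ(v, a₂)`
    (h1 : τ ∘ₗ TensorProduct.map (LinearMap.mul' k U) LinearMap.id =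
      LinearMap.mul' k k ∘ₗ TensorProduct.map τ τ ∘ₗ
        (TensorProduct.tensorTensorTensorComm k U U B B).toLinearMap ∘ₗ
        LinearMap.lTensor (U ⊗[k] U) (Coalgebra.comul (R := k) (A := B)))
    -- (2) `τ(u, ab) = τ(u₁, b) τ(u₂, a)`
    (h2 : τ ∘ₗ LinearMap.lTensor U (LinearMap.mul' k B) =
      LinearMap.mul' k k ∘ₗ TensorProduct.map τ τ ∘ₗ
        (TensorProduct.tensorTensorTensorComm k U U B B).toLinearMap ∘ₗ
        TensorProduct.map (Coalgebra.comul (R := k) (A := U))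
          (TensorProduct.comm k B B).toLinearMap)
    -- (3) `τ(1, a) = ε_B(a)`
    (h3 : ∀ a : B, τ ((1 : U) ⊗ₜ[k] a) = Coalgebra.counit (R := k) a)
    -- `σ` and `σ'` defined by the stated formulas
    (σ σ' : (U ⊗[k] B) ⊗[k] (U ⊗[k] B) →ₗ[k] k)
    (hσ : ∀ (u v : U) (a b : B), σ ((u ⊗ₜ[k] a) ⊗ₜ[k] (v ⊗ₜ[k] b)) =
      Coalgebra.counit (R := k) u * τ (v ⊗ₜ[k] a) * Coalgebra.counit (R := k) b)
    (hσ' : ∀ (u v : U) (a b : B), σ' ((u ⊗ₜ[k] a) ⊗ₜ[k] (v ⊗ₜ[k] b)) =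
      Coalgebra.counit (R := k) u * τ (HopfAlgebra.antipode (R := k) v ⊗ₜ[k] a) *
        Coalgebra.counit (R := k) b) :
    IsCocycle σ ∧ σ ((1 : U ⊗[k] B) ⊗ₜ[k] (1 : U ⊗[k] B)) = 1 ∧
    conv σ σ' = Coalgebra.counit ∧ conv σ' σ = Coalgebra.counit := by
  have hl := curry_mul_eq_conv τ h1
  have hr := flip_curry_mul_eq_conv τ h2
  have hσ'_rTensor : ∀ (u v : U) (a b : B), σ' ((u ⊗ₜ[k] a) ⊗ₜ[k] (v ⊗ₜ[k] b)) =
      counit (R := k) u * (τ ∘ₗ LinearMap.rTensor B (HopfAlgebra.antipode k)) (v ⊗ₜ a) *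
        counit (R := k) b := hσ'
  refine ⟨?_, ?_, ?_, ?_⟩
  · rw [isCocycle_iff]
    ext u a v b w c
    simp only [TensorProduct.AlgebraTensorModule.curry_apply, TensorProduct.curry_apply,
      LinearMap.coe_restrictScalars]
    rw [cocycleLhs_tmul hσ, cocycleRhs_tmul hσ, pairing_exchange τ hl hr]
  · rw [Algebra.TensorProduct.one_def, hσ, h3]
    simp only [Bialgebra.counit_one, mul_one]
  · ext u a v b
    simp only [TensorProduct.AlgebraTensorModule.curry_apply, TensorProduct.curry_apply,
      LinearMap.coe_restrictScalars]
    rw [conv_apply_of_counit_mul_mul_counit hσ hσ'_rTensor, conv_pairing_antipode τ hl h3]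
    simp only [counit_tmul, smul_eq_mul]
    ring
  · ext u a v b
    simp only [TensorProduct.AlgebraTensorModule.curry_apply, TensorProduct.curry_apply,
      LinearMap.coe_restrictScalars]
    rw [conv_apply_of_counit_mul_mul_counit hσ'_rTensor hσ, conv_antipode_pairing τ hl h3]
    simp only [counit_tmul, smul_eq_mul]
    ring

theorem tensor_cocycle_from_pairing {U B : Type u} [Ring U] [Ring B]
    [HopfAlgebra k U] [HopfAlgebra k B]
    (τ : U ⊗[k] B →ₗ[k] k)
    -- (1) `τ(uv, a) = τ(u, a₁) τ(v, a₂)`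
    (h1 : τ ∘ₗ TensorProduct.map (LinearMap.mul' k U) LinearMap.id =
      LinearMap.mul' k k ∘ₗ TensorProduct.map τ τ ∘ₗ
        (TensorProduct.tensorTensorTensorComm k U U B B).toLinearMap ∘ₗ
        LinearMap.lTensor (U ⊗[k] U) (Coalgebra.comul (R := k) (A := B)))
    -- (2) `τ(u, ab) = τ(u₁, b) τ(u₂, a)`
    (h2 : τ ∘ₗ LinearMap.lTensor U (LinearMap.mul' k B) =
      LinearMap.mul' k k ∘ₗ TensorProduct.map τ τ ∘ₗ
        (TensorProduct.tensorTensorTensorComm k U U B B).toLinearMap ∘ₗ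
        TensorProduct.map (Coalgebra.comul (R := k) (A := U))
          (TensorProduct.comm k B B).toLinearMap)
    -- (3) `τ(1, a) = ε_B(a)` and (4) `τ(u, 1) = ε_U(u)`
    (h3 : ∀ a : B, τ ((1 : U) ⊗ₜ[k] a) = Coalgebra.counit (R := k) a)
    (h4 : ∀ u : U, τ (u ⊗ₜ[k] (1 : B)) = Coalgebra.counit (R := k) u)
    -- `σ` and `σ'` defined by the stated formulas
    (σ σ' : (U ⊗[k] B) ⊗[k] (U ⊗[k] B) →ₗ[k] k)
    (hσ : ∀ (u v : U) (a b : B), σ ((u ⊗ₜ[k] a) ⊗ₜ[k] (v ⊗ₜ[k] b)) =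
      Coalgebra.counit (R := k) u * τ (v ⊗ₜ[k] a) * Coalgebra.counit (R := k) b)
    (hσ' : ∀ (u v : U) (a b : B), σ' ((u ⊗ₜ[k] a) ⊗ₜ[k] (v ⊗ₜ[k] b)) =
      Coalgebra.counit (R := k) u * τ (HopfAlgebra.antipode (R := k) v ⊗ₜ[k] a) *
        Coalgebra.counit (R := k) b) :
    IsCocycle σ ∧ σ ((1 : U ⊗[k] B) ⊗ₜ[k] (1 : U ⊗[k] B)) = 1 ∧
    conv σ σ' = Coalgebra.counit ∧ conv σ' σ = Coalgebra.counit :=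
  tensor_cocycle_from_pairing_general τ h1 h2 h3 σ σ' hσ hσ'
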